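/- If a nonempty word u is not primitive, then the length of its primitive root equals the smallest positive index i < |u| such that u occurs in uu starting at position i (equivalently, the index of the first occurrence of u in u_F u_L, counting from 1). -/

import Mathlib

/-- k-fold concatenation (power) of a word. -/
def wpow {σ : Type*} (z : List σ) (k : ℕ) : List σ := (List.replicate k z).flatten

/-- A nonempty word is primitive if it is not a proper power. -/
def WPrimitive {σ : Type*} (w : List σ) : Prop :=
  w ≠ [] ∧ ∀ (v : List σ) (e : ℕ), 2 ≤ e → w ≠ wpow v e

theorem fin_pos_of_mul {p m : ℕ} (i : Fin (p * m)) : 0 < m :=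
  Nat.pos_of_ne_zero fun h => absurd i.isLt (by simp [h])

/-- `arrRep A p q` is `A^{p×q}`: the array `A` repeated in `p` rows and `q` columns. -/
def arrRep {σ : Type*} {m n : ℕ} (A : Fin m × Fin n → σ) (p q : ℕ) :
    Fin (p * m) × Fin (q * n) → σ :=
  fun x => A (⟨x.1.val % m, Nat.mod_lt _ (fin_pos_of_mul x.1)⟩,
              ⟨x.2.val % n, Nat.mod_lt _ (fin_pos_of_mul x.2)⟩)

/-- Equality of arrays of possibly (syntactically) different dimensions. -/
def arrEq {σ : Type*} {m n m' n' : ℕ} (A : Fin m × Fin n → σ)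
    (B : Fin m' × Fin n' → σ) : Prop :=
  m = m' ∧ n = n' ∧ ∀ (i j : ℕ) (h1 : i < m) (h2 : j < n) (h1' : i < m') (h2' : j < n'),
    A (⟨i, h1⟩, ⟨j, h2⟩) = B (⟨i, h1'⟩, ⟨j, h2'⟩)

/-- An array is primitive if it is not a nontrivial `p×q` repetition of another array. -/
def ArrPrimitive {σ : Type*} {m n : ℕ} (M : Fin m × Fin n → σ) : Prop :=
  ∀ (m' n' p q : ℕ) (A : Fin m' × Fin n' → σ), 0 < p → 0 < q →
    arrEq M (arrRep A p q) → p = 1 ∧ q = 1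

/-- Horizontal concatenation of arrays with equal numbers of rows. -/
def hcat {σ : Type*} {m1 m2 n1 n2 : ℕ} (h : m1 = m2)
    (A : Fin m1 × Fin n1 → σ) (B : Fin m2 × Fin n2 → σ) :
    Fin m1 × Fin (n1 + n2) → σ :=
  fun x => if hn : x.2.val < n1 then A (x.1, ⟨x.2.val, hn⟩)
           else B (⟨x.1.val, h ▸ x.1.isLt⟩, ⟨x.2.val - n1, by have := x.2.isLt; omega⟩)

/-- Vertical concatenation of arrays with equal numbers of columns. -/
def vcat {σ : Type*} {m1 m2 n1 n2 : ℕ} (h : n1 = n2)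
    (A : Fin m1 × Fin n1 → σ) (B : Fin m2 × Fin n2 → σ) :
    Fin (m1 + m2) × Fin n1 → σ :=
  fun x => if hm : x.1.val < m1 then A (⟨x.1.val, hm⟩, x.2)
           else B (⟨x.1.val - m1, by have := x.1.isLt; omega⟩, ⟨x.2.val, h ▸ x.2.isLt⟩)

/-- The word over the alphabet of columns corresponding to an array. -/
def colWord {σ : Type*} {m n : ℕ} (A : Fin m × Fin n → σ) : List (Fin m → σ) :=
  List.ofFn fun j => fun i => A (i, j)

/-- Row `i` of an array, as a word. -/
def rowWord {σ : Type*} {m n : ℕ} (A : Fin m × Fin n → σ) (i : Fin m) : List σ :=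
  List.ofFn fun j => A (i, j)

/-- Column `j` of an array, as a word. -/
def colAt {σ : Type*} {m n : ℕ} (A : Fin m × Fin n → σ) (j : Fin n) : List σ :=
  List.ofFn fun i => A (i, j)

/-- Row-major reading of an array. -/
def rowMajor {σ : Type*} {m n : ℕ} (A : Fin m × Fin n → σ) : List σ :=
  (List.ofFn fun i => rowWord A i).flatten

/-- `{x,y}*`: words that are concatenations of copies of `x` and `y`. -/
def InStar {σ : Type*} (x y w : List σ) : Prop :=
  ∃ L : List (List σ), (∀ u ∈ L, u = x ∨ u = y) ∧ w = L.flatten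

/-! An occurrence of `u` at position `i ≤ |u|` of `uu` is the equation `u.rotate i = u`, and
rotating `z ^ k` by `i` gives `(z.rotate i) ^ k`, so for `u = z ^ k` this says `z.rotate i = z`.
The rotations fixing a word are closed under taking the gcd with its length, and a word fixed by
rotation by a proper divisor `g` of its length is a power of its prefix of length `g`. Hence for
primitive `z` the rotations fixing `z` are exactly the multiples of `|z|`. -/

section

variable {α : Type*}

open List

theorem wpow_succ (z : List α) (k : ℕ) : wpow z (k + 1) = z ++ wpow z k := by
  simp [wpow, replicate_succ]

theorem wpow_one (z : List α) : wpow z 1 = z := by simp [wpow]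

theorem length_wpow (z : List α) (k : ℕ) : (wpow z k).length = k * z.length := by
  simp [wpow, length_flatten]

theorem getElem_wpow (z : List α) (k j : ℕ) (h : j < (wpow z k).length) :
    (wpow z k)[j] = z[j % z.length]'(Nat.mod_lt _ (by
      rw [length_wpow] at h; exact Nat.pos_of_mul_pos_left (Nat.zero_lt_of_lt h))) := by
  induction k generalizing j with
  | zero => simp [wpow] at h
  | succ k ih =>
    simp only [wpow_succ, getElem_append]
    split_ifs with hj
    · simp only [Nat.mod_eq_of_lt hj]
    · rw [ih]
      simp only [← Nat.mod_eq_sub_mod (Nat.le_of_not_lt hj)]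

theorem take_length_wpow (z : List α) {k : ℕ} (hk : k ≠ 0) : (wpow z k).take z.length = z := by
  obtain ⟨k, rfl⟩ := Nat.exists_eq_succ_of_ne_zero hk
  rw [wpow_succ, take_left]

theorem rotate_wpow (z : List α) (k n : ℕ) : (wpow z k).rotate n = wpow (z.rotate n) k := by
  refine ext_getElem (by simp [length_wpow]) fun m h₁ h₂ => ?_
  simp only [getElem_rotate, getElem_wpow, length_wpow, length_rotate,
    Nat.mod_mod_of_dvd _ (dvd_mul_left _ _), Nat.mod_add_mod]

theorem rotate_wpow_eq_self_iff (z : List α) {k n : ℕ} (hk : k ≠ 0) :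
    (wpow z k).rotate n = wpow z k ↔ z.rotate n = z := by
  rw [rotate_wpow]
  refine ⟨fun h => ?_, fun h => by rw [h]⟩
  have h' := congrArg (take (z.rotate n).length) h
  rwa [take_length_wpow _ hk, length_rotate, take_length_wpow _ hk] at h'

theorem List.take_drop_append_self_eq_rotate (l : List α) {n : ℕ} (hn : n ≤ l.length) :
    ((l ++ l).drop n).take l.length = l.rotate n := by
  rw [drop_append_of_le_length hn, take_append, length_drop, take_of_length_le (by simp),
    Nat.sub_sub_self hn, rotate_eq_drop_append_take hn]

theorem List.rotate_mul_eq_self {l : List α} {n : ℕ} (h : l.rotate n = l) (m : ℕ) :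
    l.rotate (n * m) = l := by
  induction m with
  | zero => simp
  | succ m ih => rw [Nat.mul_succ, ← rotate_rotate, ih, h]

theorem List.rotate_gcd_eq_self {l : List α} {n : ℕ} (h : l.rotate n = l) :
    l.rotate (n.gcd l.length) = l := by
  rcases lt_or_ge (n.gcd l.length) l.length with hlt | hge
  · obtain ⟨m, -, hm⟩ := Nat.exists_mul_mod_eq_gcd hlt
    rw [← hm, rotate_mod, rotate_mul_eq_self h]
  · obtain hp | hp := Nat.eq_zero_or_pos l.length
    · simp [length_eq_zero_iff.1 hp]
    · rw [le_antisymm (Nat.le_of_dvd hp (Nat.gcd_dvd_right _ _)) hge, rotate_length]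

theorem eq_wpow_take_of_rotate_eq_self {l : List α} {d : ℕ} (hd : d ∣ l.length)
    (h : l.rotate d = l) : l = wpow (l.take d) (l.length / d) := by
  rcases eq_or_ne l [] with rfl | hl
  · simp [wpow]
  have hdl : d ≤ l.length := Nat.le_of_dvd (length_pos_iff.mpr hl) hd
  refine ext_getElem (by simp [length_wpow, hdl, Nat.div_mul_cancel hd]) fun m h₁ h₂ => ?_
  have key := getElem_rotate l (d * (m / d)) (m % d)
    (by rw [length_rotate]; exact (Nat.mod_le m d).trans_lt h₁)
  simp only [rotate_mul_eq_self h, Nat.mod_add_div, Nat.mod_eq_of_lt h₁] at key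
  simp [getElem_wpow, key, hdl]

theorem WPrimitive.rotate_eq_self_iff {z : List α} (hz : WPrimitive z) {n : ℕ} :
    z.rotate n = z ↔ z.length ∣ n := by
  have hp : 0 < z.length := length_pos_iff.mpr hz.1
  refine ⟨fun h => ?_, fun ⟨m, hm⟩ => hm ▸ rotate_length_mul z m⟩
  set g := n.gcd z.length
  have hgp : g ∣ z.length := Nat.gcd_dvd_right n z.length
  by_contra hn
  have hg_lt : g < z.length :=
    (Nat.le_of_dvd hp hgp).lt_of_ne fun he => hn (he ▸ Nat.gcd_dvd_left n z.length)
  have hg_pos : 0 < g := Nat.gcd_pos_of_pos_right n hp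
  refine hz.2 _ _ ?_ (eq_wpow_take_of_rotate_eq_self hgp (rotate_gcd_eq_self h))
  obtain ⟨c, hc⟩ := hgp
  rw [hc] at hg_lt
  rw [hc, Nat.mul_div_cancel_left _ hg_pos]
  exact Nat.lt_of_mul_lt_mul_left (a := g) (by rwa [mul_one])

end

open List in
theorem stmt18_general {σ : Type*} (u z : List σ) (hnp : ¬ WPrimitive u)
    (hz : WPrimitive z) (k : ℕ) (hk : 0 < k) (hzu : u = wpow z k) :
    IsLeast {i : ℕ | 0 < i ∧ i < u.length ∧
      (List.drop i (u ++ u)).take u.length = u} z.length := by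
  subst hzu
  have hp : 0 < z.length := length_pos_iff.mpr hz.1
  have hk₁ : k ≠ 1 := by rintro rfl; exact hnp (by rwa [wpow_one])
  have hlen : z.length < (wpow z k).length := by
    rw [length_wpow]; exact lt_mul_left hp (by omega)
  have hocc : ∀ i ≤ (wpow z k).length,
      ((wpow z k ++ wpow z k).drop i).take (wpow z k).length = wpow z k ↔ z.length ∣ i := by
    intro i hi
    rw [take_drop_append_self_eq_rotate _ hi, rotate_wpow_eq_self_iff _ hk.ne',
      hz.rotate_eq_self_iff]
  refine ⟨⟨hp, hlen, (hocc _ hlen.le).2 dvd_rfl⟩, ?_⟩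
  rintro i ⟨hi, hiu, hi_occ⟩
  exact Nat.le_of_dvd hi ((hocc i hiu.le).1 hi_occ)

theorem stmt18 {σ : Type*} (u z : List σ) (hu : u ≠ []) (hnp : ¬ WPrimitive u)
    (hz : WPrimitive z) (k : ℕ) (hk : 0 < k) (hzu : u = wpow z k) :
    IsLeast {i : ℕ | 0 < i ∧ i < u.length ∧
      (List.drop i (u ++ u)).take u.length = u} z.length :=
  stmt18_general u z hnp hz k hk hzu
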